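/- Let C be a Hopf algebra over k with antipode S, and let λ: C → k be a normalised left integral, i.e. a k-linear map with c₍₁₎λ(c₍₂₎) = λ(c)·1_C for all c ∈ C and λ(1_C) = 1. Then the map δ: C⊗C → k defined by δ(c⊗c') = λ(c·S(c')) is a cointegral on C; in particular C is coseparable. -/

import Mathlib

open TensorProduct LinearMap

noncomputable section

variable {k : Type*} [Field k]
variable {C : Type*} [Ring C] [HopfAlgebra k C]

/-- A cointegral on the coalgebra `C`: `δ(c₍₁₎ ⊗ c₍₂₎) = ε(c)` and
`c₍₁₎ δ(c₍₂₎ ⊗ c') = δ(c ⊗ c'₍₁₎) c'₍₂₎`. -/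
def IsCointegral (δ : C ⊗[k] C →ₗ[k] k) : Prop :=
  (∀ c : C, δ (Coalgebra.comul (R := k) c) = Coalgebra.counit (R := k) c) ∧
  (∀ c c' : C,
    (TensorProduct.rid k C) (lTensor C δ ((TensorProduct.assoc k C C C)
      ((Coalgebra.comul (R := k) c) ⊗ₜ c'))) =
    (TensorProduct.lid k C) (rTensor C δ ((TensorProduct.assoc k C C C).symm
      (c ⊗ₜ (Coalgebra.comul (R := k) c')))))

/-!
Write `⋆` for convolution of linear maps out of a coalgebra. In `C →ₗ C ⊗ C`, with
`ι₁ x = x ⊗ 1` and `ι₂ x = 1 ⊗ x`, we have `Δ = ι₁ ⋆ ι₂` and `(S ⊗ S) ∘ τ ∘ Δ = (ι₂ ∘ S) ⋆ (ι₁ ∘ S)`,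
so `(S ⊗ S) ∘ τ ∘ Δ` is a left convolution inverse of `Δ`; as `Δ ∘ S` is a right one, the antipode
is anti-comultiplicative.

Fix `c` and put `f x = c₍₁₎ λ(c₍₂₎ S x)` and `g x = λ(c S x) 1`. Since
`Δ(c S x) = c₍₁₎ S(x₍₂₎) ⊗ c₍₂₎ S(x₍₁₎)`, the integral property at `c S x` says `f ⋆ S = g`,
hence `f = f ⋆ S ⋆ id = g ⋆ id`: evaluated at `c'` this is `c₍₁₎ λ(c₍₂₎ S c') = λ(c S c'₍₁₎) c'₍₂₎`.
-/

open Coalgebra HopfAlgebra WithConv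
open Algebra.TensorProduct (includeLeft includeRight)

lemma rid_lTensor_mul_tmul_one {R A : Type*} [CommSemiring R] [Semiring A] [Algebra R A]
    (lam : A →ₗ[R] R) (t : A ⊗[R] A) (y : A) :
    TensorProduct.rid R A (lTensor A lam (t * (y ⊗ₜ 1))) =
      TensorProduct.rid R A (lTensor A lam t) * y := by
  induction t using TensorProduct.induction_on with
  | zero => simp
  | tmul a b => simp
  | add t u ht hu => simp [add_mul, ht, hu]

namespace HopfAlgebra

variable {R A : Type*} [CommSemiring R] [Semiring A] [HopfAlgebra R A]

lemma toConv_comul_eq_includeLeft_convMul_includeRight :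
    toConv (comul : A →ₗ[R] A ⊗[R] A) =
      toConv (includeLeft : A →ₐ[R] A ⊗[R] A).toLinearMap *
        toConv (includeRight : A →ₐ[R] A ⊗[R] A).toLinearMap := by
  ext a
  simp [(ℛ R a).convMul_apply, ← (ℛ R a).eq]

lemma toConv_map_antipode_comm_comul_eq_convMul :
    toConv (map (antipode R) (antipode R) ∘ₗ (TensorProduct.comm R A A).toLinearMap ∘ₗ comul) =
      toConv ((includeRight : A →ₐ[R] A ⊗[R] A).toLinearMap ∘ₗ antipode R) *
        toConv ((includeLeft : A →ₐ[R] A ⊗[R] A).toLinearMap ∘ₗ antipode R) := by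
  ext a
  simp [(ℛ R a).convMul_apply, ← (ℛ R a).eq]

lemma algHom_comp_antipode_convMul {B : Type*} [Semiring B] [Algebra R B] (h : A →ₐ[R] B) :
    toConv (h.toLinearMap ∘ₗ antipode R) * toConv h.toLinearMap = 1 := by
  have := algHom_comp_convMul_distrib h (toConv (antipode R)) (toConv LinearMap.id)
  rw [antipode_mul_id] at this
  ext a
  simpa using congr($this a).symm

lemma map_antipode_comm_comul_convMul_comul :
    toConv (map (antipode R) (antipode R) ∘ₗ (TensorProduct.comm R A A).toLinearMap ∘ₗ comul) *
      toConv (comul : A →ₗ[R] A ⊗[R] A) = 1 := by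
  rw [toConv_map_antipode_comm_comul_eq_convMul,
    toConv_comul_eq_includeLeft_convMul_includeRight, mul_assoc,
    ← mul_assoc (toConv (includeLeft.toLinearMap ∘ₗ antipode R)), algHom_comp_antipode_convMul,
    one_mul, algHom_comp_antipode_convMul]

theorem comul_comp_antipode :
    comul ∘ₗ antipode R =
      map (antipode R) (antipode R) ∘ₗ (TensorProduct.comm R A A).toLinearMap ∘ₗ comul :=
  congr(ofConv $((left_inv_eq_right_inv map_antipode_comm_comul_convMul_comul
    LinearMap.comul_right_inv).symm))

theorem comul_antipode (a : A) :
    comul (antipode R a) = map (antipode R) (antipode R) (TensorProduct.comm R A A (comul a)) :=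
  congr($comul_comp_antipode a)

def IsLeftIntegral (lam : A →ₗ[R] R) : Prop :=
  ∀ a : A, TensorProduct.rid R A (lTensor A lam (comul a)) = lam a • (1 : A)

variable {lam : A →ₗ[R] R}

lemma IsLeftIntegral.convMul_antipode (h : IsLeftIntegral lam) (a : A) :
    toConv ((TensorProduct.rid R A).toLinearMap ∘ₗ lTensor A lam ∘ₗ mulLeft R (comul a) ∘ₗ
        (includeRight : A →ₐ[R] A ⊗[R] A).toLinearMap ∘ₗ antipode R) * toConv (antipode R) =
      toConv (Algebra.linearMap R A ∘ₗ lam ∘ₗ mulLeft R a ∘ₗ antipode R) := by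
  ext x
  have hS : ∑ i ∈ (ℛ R x).index, (1 ⊗ₜ antipode R ((ℛ R x).left i)) *
      (antipode R ((ℛ R x).right i) ⊗ₜ[R] (1 : A)) = comul (antipode R x) := by
    simp [comul_antipode, ← (ℛ R x).eq, map_sum]
  rw [(ℛ R x).convMul_apply]
  simp only [coe_comp, LinearEquiv.coe_coe, Function.comp_apply, mulLeft_apply,
    AlgHom.toLinearMap_apply, Algebra.TensorProduct.includeRight_apply]
  simp only [← rid_lTensor_mul_tmul_one, mul_assoc, ← map_sum, ← Finset.mul_sum, hS]
  rw [← Bialgebra.comul_mul, h, Algebra.smul_def, mul_one]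
  rfl

theorem IsLeftIntegral.rid_lTensor_comul_mul_tmul_antipode (h : IsLeftIntegral lam) (a x : A) :
    TensorProduct.rid R A (lTensor A lam (comul a * (1 ⊗ₜ antipode R x))) =
      TensorProduct.lid R A (rTensor A (lam ∘ₗ mulLeft R a ∘ₗ antipode R) (comul x)) := by
  have hconv := congr($(h.convMul_antipode a) * toConv LinearMap.id)
  rw [mul_assoc, antipode_mul_id, mul_one] at hconv
  have := congr($hconv x)
  rw [(ℛ R x).convMul_apply] at this
  simpa [← (ℛ R x).eq, Algebra.smul_def] using this

theorem IsLeftIntegral.isCointegral {lam : C →ₗ[k] k} (h : IsLeftIntegral lam) (hone : lam 1 = 1) :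
    IsCointegral (lam ∘ₗ mul' k C ∘ₗ lTensor C (antipode k)) := by
  constructor
  · intro c
    simp [mul_antipode_lTensor_comul_apply, Algebra.algebraMap_eq_smul_one, hone]
  · intro c c'
    have := h.rid_lTensor_comul_mul_tmul_antipode c c'
    rw [← (ℛ k c).eq, ← (ℛ k c').eq] at this ⊢
    simpa [sum_tmul, tmul_sum, Finset.sum_mul] using this

end HopfAlgebra

/-- A normalised left integral `λ` on a Hopf algebra `C` (i.e. `c₍₁₎λ(c₍₂₎) = λ(c)·1`
and `λ(1) = 1`) yields the cointegral `δ(c ⊗ c') = λ(c·S(c'))`; in particular `C` is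
coseparable. -/
theorem integral_gives_cointegral
    (lam : C →ₗ[k] k)
    (hlam : ∀ c : C,
      (TensorProduct.rid k C) (lTensor C lam (Coalgebra.comul (R := k) c)) =
        lam c • (1 : C))
    (hone : lam 1 = 1) :
    IsCointegral
      (lam ∘ₗ mul' k C ∘ₗ lTensor C (HopfAlgebra.antipode (R := k))) ∧
    ∃ δ : C ⊗[k] C →ₗ[k] k, IsCointegral δ :=
  have hδ := IsLeftIntegral.isCointegral hlam hone
  ⟨hδ, _, hδ⟩
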